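/- Let w ∈ S_n be 1432-avoiding with first ascent r (smallest index with w_r < w_{r+1}), let T be a set-valued Rothe tableau of shape D(w) flagged by (1,...,n), and define E(T), P(T), Q(T) with respect to {r, r+1} as follows: E(T) = {B ∈ D(w) : T(B) ∩ {r,r+1} ≠ ∅}, P(T) = squares of E(T) alone in their column within E(T), Q(T) = E(T) \ P(T). If (i,j) ∈ P(T) and i > r, then there do not exist squares (i,k) and (h,k) in Q(T) with h > i and k < j. -/

import Mathlib

open Finset

/-- The Rothe diagram of `w` (0-based): squares `(i,j)` with `w i > j` and `w⁻¹ j > i`. -/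
def RD {n : ℕ} (w : Equiv.Perm (Fin n)) : Finset (Fin n × Fin n) :=
  Finset.univ.filter (fun p => p.2 < w p.1 ∧ p.1 < w⁻¹ p.2)

/-- `m_{ij}(w)`: the number of squares of `D(w)` in row `i` weakly left of column `j`. -/
def mStat {n : ℕ} (w : Equiv.Perm (Fin n)) (i j : Fin n) : ℕ :=
  ((RD w).filter (fun p => p.1 = i ∧ p.2 ≤ j)).card

/-- A set-valued Rothe tableau of shape `D(w)` flagged by `(1,2,…,n)`:
each square of `D(w)` carries a finite nonempty set of positive integers,
rows are weakly decreasing (for `j < j'` in a row, `max T(i,j') ≤ min T(i,j)`),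
columns are strictly increasing, and every entry in (0-based) row `i` is `≤ i+1`. -/
def IsSVRT {n : ℕ} (w : Equiv.Perm (Fin n)) (T : Fin n × Fin n → Finset ℕ) : Prop :=
  (∀ p ∈ RD w, (T p).Nonempty) ∧
  (∀ i j j' : Fin n, j < j' → (i, j) ∈ RD w → (i, j') ∈ RD w →
      ∀ a ∈ T (i, j'), ∀ b ∈ T (i, j), a ≤ b) ∧
  (∀ i i' j : Fin n, i < i' → (i, j) ∈ RD w → (i', j) ∈ RD w →
      ∀ a ∈ T (i, j), ∀ b ∈ T (i', j), a < b) ∧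
  (∀ p ∈ RD w, ∀ a ∈ T p, 1 ≤ a ∧ a ≤ (p.1 : ℕ) + 1)

/-- `E(T)`: the squares of `D(w)` whose set contains `r` or `r+1`. -/
def Eset {n : ℕ} (w : Equiv.Perm (Fin n)) (T : Fin n × Fin n → Finset ℕ) (r : ℕ) :
    Finset (Fin n × Fin n) :=
  (RD w).filter (fun p => r ∈ T p ∨ r + 1 ∈ T p)

/-- `P(T)`: squares of `E(T)` that are alone in their column within `E(T)`. -/
def Pset {n : ℕ} (w : Equiv.Perm (Fin n)) (T : Fin n × Fin n → Finset ℕ) (r : ℕ) :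
    Finset (Fin n × Fin n) :=
  (Eset w T r).filter (fun p => ∀ q ∈ Eset w T r, q.2 = p.2 → q = p)

/-- `Q(T) = E(T) \ P(T)`. -/
def Qset {n : ℕ} (w : Equiv.Perm (Fin n)) (T : Fin n × Fin n → Finset ℕ) (r : ℕ) :
    Finset (Fin n × Fin n) :=
  Eset w T r \ Pset w T r

def Avoids1432 {n : ℕ} (w : Equiv.Perm (Fin n)) : Prop :=
  ¬ ∃ i1 i2 i3 i4 : Fin n, i1 < i2 ∧ i2 < i3 ∧ i3 < i4 ∧
      w i1 < w i4 ∧ w i4 < w i3 ∧ w i3 < w i2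

/-- Let `w` be 1432-avoiding with first ascent at 0-based position `a`
(so the 1-based first ascent is `r = a+1`), and let `E, P, Q` be taken with
respect to the values `{r, r+1} = {a+1, a+2}`.  If `(i,j) ∈ P(T)` with `i > r`
(0-based: `i > a`), then there are no squares `(i,k), (h,k) ∈ Q(T)` with
`h > i` and `k < j`. -/
theorem stmt8 {n : ℕ} (w : Equiv.Perm (Fin n)) (hw : Avoids1432 w)
    (a : ℕ) (ha : a + 1 < n)
    (hasc : w ⟨a, by omega⟩ < w ⟨a + 1, ha⟩)
    (hmin : ∀ s : ℕ, ∀ hs : s < a, w ⟨s + 1, by omega⟩ < w ⟨s, by omega⟩)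
    (T : Fin n × Fin n → Finset ℕ) (hT : IsSVRT w T)
    (i j : Fin n) (hP : (i, j) ∈ Pset w T (a + 1)) (hi : a < (i : ℕ)) :
    ¬ ∃ h k : Fin n, (i, k) ∈ Qset w T (a + 1) ∧ (h, k) ∈ Qset w T (a + 1) ∧
        i < h ∧ k < j := by
  rintro ⟨h, k, hQik, hQhk, hih, hkj⟩
  obtain ⟨hne, hrow, hcol, hflag⟩ := hT
  have hRD : ∀ p : Fin n × Fin n, p ∈ RD w ↔ p.2 < w p.1 ∧ p.1 < w⁻¹ p.2 := by
    intro p; simp [RD]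
  have hE : ∀ p : Fin n × Fin n, p ∈ Eset w T (a + 1) ↔
      p ∈ RD w ∧ (a + 1 ∈ T p ∨ a + 2 ∈ T p) := by
    intro p; simp [Eset]
  -- unpack P and Q memberships
  have hPm := Finset.mem_filter.mp hP
  have hEij := (hE _).mp hPm.1
  have huniq : ∀ q ∈ Eset w T (a + 1), q.2 = j → q = (i, j) := hPm.2
  have hEik := (hE _).mp (Finset.mem_sdiff.mp hQik).1
  have hEhk := (hE _).mp (Finset.mem_sdiff.mp hQhk).1
  have hRDij : j < w i ∧ i < w⁻¹ j := (hRD _).mp hEij.1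
  have hRDik : k < w i ∧ i < w⁻¹ k := (hRD _).mp hEik.1
  have hRDhk : k < w h ∧ h < w⁻¹ k := (hRD _).mp hEhk.1
  -- Step 1: a+1 ∈ T(i,k)
  have h1 : a + 1 ∈ T (i, k) := by
    rcases hEik.2 with h' | h'
    · exact h'
    · exfalso
      rcases hEhk.2 with h'' | h''
      · have := hcol i h k hih hEik.1 hEhk.1 (a + 2) h' (a + 1) h''; omega
      · have := hcol i h k hih hEik.1 hEhk.1 (a + 2) h' (a + 2) h''; omega
  -- Step 2: a+2 ∈ T(h,k)
  have h2 : a + 2 ∈ T (h, k) := by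
    rcases hEhk.2 with h' | h'
    · exfalso
      have := hcol i h k hih hEik.1 hEhk.1 (a + 1) h1 (a + 1) h'; omega
    · exact h'
  -- Step 3: a+1 ∈ T(i,j)
  have h3 : a + 1 ∈ T (i, j) := by
    rcases hEij.2 with h' | h'
    · exact h'
    · exfalso
      have := hrow i k j hkj hEik.1 hEij.1 (a + 2) h' (a + 1) h1; omega
  have han : a < n := by omega
  -- Step 4: w ⟨a⟩ < k
  have hwak : w ⟨a, han⟩ < k := by
    by_contra hcon
    push_neg at hcon
    -- k ≤ w ⟨a⟩; first rule out equality
    have hne' : k ≠ w ⟨a, han⟩ := by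
      intro he
      have : w⁻¹ k = ⟨a, han⟩ := by rw [he]; exact w.symm_apply_apply _
      have h5 := hRDik.2
      rw [this] at h5
      have h6 : (i : ℕ) < a := h5
      omega
    have hka : k < w ⟨a, han⟩ := lt_of_le_of_ne hcon hne'
    -- decreasing prefix
    have dec : ∀ t (ht : t ≤ a) (s : ℕ) (hst : s ≤ t),
        w ⟨t, by omega⟩ ≤ w ⟨s, by omega⟩ := by
      intro t
      induction t with
      | zero => intro _ s hs; have : s = 0 := by omega
                subst this; exact le_rfl
      | succ q ih =>
        intro ht s hst
        by_cases hs : s = q + 1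
        · subst hs; exact le_rfl
        · have hlt : w ⟨q + 1, by omega⟩ < w ⟨q, by omega⟩ := hmin q (by omega)
          exact le_trans hlt.le (ih (by omega) s (by omega))
    -- all squares (p, k), p ≤ a, are in RD w
    have colk : ∀ p (hp : p ≤ a), ((⟨p, by omega⟩ : Fin n), k) ∈ RD w := by
      intro p hp
      refine (hRD _).mpr ⟨lt_of_lt_of_le hka (dec a le_rfl p hp), ?_⟩
      have h5 := hRDik.2
      rw [Fin.lt_def] at h5
      exact Fin.lt_def.mpr (show p < ((w⁻¹ k : Fin n) : ℕ) by omega)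
    -- chain: entries in (p,k) are ≥ p+1
    have chain : ∀ p (hp : p ≤ a), ∀ x ∈ T (⟨p, by omega⟩, k), p + 1 ≤ x := by
      intro p
      induction p with
      | zero => intro hp x hx; exact (hflag _ (colk 0 (by omega)) x hx).1
      | succ q ih =>
        intro hp x hx
        obtain ⟨y, hy⟩ := hne _ (colk q (by omega))
        have hlt : y < x := hcol ⟨q, by omega⟩ ⟨q + 1, by omega⟩ k
          (Fin.mk_lt_mk.mpr (by omega)) (colk q (by omega)) (colk (q + 1) (by omega)) y hy x hx
        have := ih (by omega) y hy
        omega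
    obtain ⟨y, hy⟩ := hne _ (colk a le_rfl)
    have hy1 : a + 1 ≤ y := chain a le_rfl y hy
    have hy2 : y < a + 1 := hcol ⟨a, han⟩ i k (by rw [Fin.lt_def]; exact hi)
      (colk a le_rfl) hEik.1 y hy (a + 1) h1
    omega
  set m := w⁻¹ k with hm
  have hwm : w m = k := w.apply_symm_apply k
  have hhm : h < m := hRDhk.2
  -- Step 6: j < w h
  have h6 : j < w h := by
    by_contra hcon
    push_neg at hcon
    exact hw ⟨⟨a, han⟩, i, h, m, by rw [Fin.lt_def]; exact hi, hih, hhm,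
      by rw [hwm]; exact hwak, by rw [hwm]; exact hRDhk.1,
      lt_of_le_of_lt hcon hRDij.1⟩
  -- Step 7: h < w⁻¹ j
  have h7 : h < w⁻¹ j := by
    by_contra hcon
    push_neg at hcon
    set p := w⁻¹ j with hp'
    have hwp : w p = j := w.apply_symm_apply j
    have hph : p ≠ h := by
      intro he; rw [he] at hwp; rw [hwp] at h6; exact lt_irrefl _ h6
    have hplt : p < h := lt_of_le_of_ne hcon hph
    exact hw ⟨⟨a, han⟩, i, p, m, by rw [Fin.lt_def]; exact hi, hRDij.2,
      lt_trans hplt hhm, by rw [hwm]; exact hwak,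
      by rw [hwm, hwp]; exact hkj, by rw [hwp]; exact hRDij.1⟩
  -- Step 8: (h, j) ∈ RD w
  have hRDhj : (h, j) ∈ RD w := (hRD _).mpr ⟨h6, h7⟩
  -- Step 9: a+2 ∈ T (h, j)
  obtain ⟨x, hx⟩ := hne _ hRDhj
  have hx1 : a + 1 < x := hcol i h j hih hEij.1 hRDhj (a + 1) h3 x hx
  have hx2 : x ≤ a + 2 := hrow h k j hkj hEhk.1 hRDhj x hx (a + 2) h2
  have hxa : x = a + 2 := by omega
  -- Step 10: contradiction with P
  have hEhj : (h, j) ∈ Eset w T (a + 1) := (hE _).mpr ⟨hRDhj, Or.inr (hxa ▸ hx)⟩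
  have := huniq (h, j) hEhj rfl
  have : h = i := congrArg Prod.fst this
  subst this
  exact lt_irrefl _ hih
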